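/- arXiv:1908.03209 — 2 statements merged into one kernel-verified Lean document; each statement's English description precedes it below -/
import Mathlib

section
/- States on the 2-shock curve satisfy the Rankine–Hugoniot conditions: if ρ, ρ₀ > 0 with ρ ≠ ρ₀, v = v₀ + sqrt((p(ρ)−p(ρ₀))/(ρρ₀(ρ−ρ₀)))·(ρ−ρ₀), m = ρv, m₀ = ρ₀v₀, then there exists λ ∈ ℝ with λ(ρ−ρ₀) = m−m₀ and λ(m−m₀) = (m²/ρ + p(ρ)) − (m₀²/ρ₀ + p(ρ₀)). -/
/-! A state on the 2-shock curve moves with the shock speed `λ = v₀ + ρ s`, where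
`s² = (p(ρ) - p(ρ₀)) / (ρ ρ₀ (ρ - ρ₀))`. Since `m - m₀ = (v₀ + ρ s)(ρ - ρ₀)`, the first
Rankine–Hugoniot condition holds by construction, and the second one reduces to the defining
identity `s² ρ ρ₀ (ρ - ρ₀) = p(ρ) - p(ρ₀)`. That `s` really squares to this quotient needs the
quotient to be nonnegative, i.e. a nonnegative slope of the increasing pressure. -/

lemma MonotoneOn.div_mul_sub_nonneg {f : ℝ → ℝ} {s : Set ℝ} (hf : MonotoneOn f s) {a b : ℝ}
    (ha : a ∈ s) (hb : b ∈ s) {c : ℝ} (hc : 0 ≤ c) : 0 ≤ (f a - f b) / (c * (a - b)) := by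
  rw [mul_comm, ← div_div, ← slope_def_field]
  exact div_nonneg (hf.slope_nonneg hb ha) hc

lemma monotoneOn_rpow_div_Ici {γ : ℝ} (hγ : 0 < γ) :
    MonotoneOn (fun r : ℝ => r ^ γ / γ) (Set.Ici 0) :=
  fun _ ha _ hb hab =>
    div_le_div_of_nonneg_right (Real.monotoneOn_rpow_Ici_of_exponent_nonneg hγ.le ha hb hab) hγ.le

theorem rankine_hugoniot_of_sq_eq_slope {p : ℝ → ℝ} {ρ ρ₀ v v₀ s : ℝ} (hρ : ρ ≠ 0)
    (hρ₀ : ρ₀ ≠ 0) (hne : ρ ≠ ρ₀) (hs : s ^ 2 = (p ρ - p ρ₀) / (ρ * ρ₀ * (ρ - ρ₀)))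
    (hv : v = v₀ + s * (ρ - ρ₀)) :
    (v₀ + ρ * s) * (ρ - ρ₀) = ρ * v - ρ₀ * v₀ ∧
      (v₀ + ρ * s) * (ρ * v - ρ₀ * v₀) =
        ((ρ * v) ^ 2 / ρ + p ρ) - ((ρ₀ * v₀) ^ 2 / ρ₀ + p ρ₀) := by
  have hΔ : ρ - ρ₀ ≠ 0 := sub_ne_zero.mpr hne
  have hkey : s ^ 2 * (ρ * ρ₀ * (ρ - ρ₀)) = p ρ - p ρ₀ := by
    rw [hs]; field_simp
  subst hv
  constructor
  · ring
  · field_simp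
    linear_combination hkey

theorem two_shock_rankine_hugoniot (γ ρ ρ₀ v₀ : ℝ) (hγ : 1 < γ)
    (hρ : 0 < ρ) (hρ₀ : 0 < ρ₀) (hne : ρ ≠ ρ₀)
    (p : ℝ → ℝ) (hp : ∀ r, p r = r ^ γ / γ)
    (v m m₀ : ℝ)
    (hv : v = v₀ + Real.sqrt ((p ρ - p ρ₀) / (ρ * ρ₀ * (ρ - ρ₀))) * (ρ - ρ₀))
    (hm : m = ρ * v) (hm₀ : m₀ = ρ₀ * v₀) :
    ∃ lam : ℝ, lam * (ρ - ρ₀) = m - m₀ ∧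
      lam * (m - m₀) = (m ^ 2 / ρ + p ρ) - (m₀ ^ 2 / ρ₀ + p ρ₀) := by
  have hp_mono : MonotoneOn p (Set.Ici 0) := by
    rw [funext hp]; exact monotoneOn_rpow_div_Ici (by linarith)
  have hslope : 0 ≤ (p ρ - p ρ₀) / (ρ * ρ₀ * (ρ - ρ₀)) :=
    hp_mono.div_mul_sub_nonneg (Set.mem_Ici.mpr hρ.le) (Set.mem_Ici.mpr hρ₀.le)
      (mul_pos hρ hρ₀).le
  subst hm hm₀
  exact ⟨_, rankine_hugoniot_of_sq_eq_slope hρ.ne' hρ₀.ne' hne (Real.sq_sqrt hslope) hv⟩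
end

section
/- Entropy condition for 2-shocks with the mechanical energy: for γ > 1, p(ρ) = ρ^γ/γ, if (ρ₀,v₀) and (ρ,v) with 0 < ρ < ρ₀ are connected by a 2-shock (v − v₀ = sqrt((p(ρ)−p(ρ₀))/(ρρ₀(ρ−ρ₀)))·(ρ−ρ₀)) with shock speed λ = (m − m₀)/(ρ − ρ₀), then λ(η*(u)−η*(u₀)) − (q*(u)−q*(u₀)) ≥ 0, where u = (ρ, ρv), u₀ = (ρ₀, ρ₀v₀). -/
/-!
Write `s ≥ 0` for the square root in the 2-shock curve, so that `v - v₀ = s (ρ - ρ₀)` and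
`γ s² ρ ρ₀ (ρ - ρ₀) = ρ^γ - ρ₀^γ`. Using this Rankine–Hugoniot relation, the entropy dissipation
`λ (η* - η*₀) - (q* - q*₀)` collapses to `s · ((γ-1)(ρ₀-ρ)(ρ^γ+ρ₀^γ)/2 + ρ₀ρ^γ - ρρ₀^γ) / (γ(γ-1))`.
By homogeneity the bracket is `ρ₀^(γ+1) G(ρ/ρ₀)` with
`G(t) = (γ-1)(1-t)(t^γ+1)/2 + t^γ - t`, and `G ≥ 0` on `(0, 1]` because `G(1) = G'(1) = 0` while
`G''(t) = γ(γ-1)(γ+1) t^(γ-2) (1-t)/2 ≥ 0` there.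
-/

open Set

theorem nonneg_of_hasDerivAt_of_deriv2_nonneg {f f' f'' : ℝ → ℝ} {a b : ℝ} (hab : a ≤ b)
    (hf : ∀ x ∈ Icc a b, HasDerivAt f (f' x) x) (hf' : ∀ x ∈ Icc a b, HasDerivAt f' (f'' x) x)
    (hf'' : ∀ x ∈ Ioo a b, 0 ≤ f'' x) (hfb : 0 ≤ f b) (hf'b : f' b ≤ 0) : 0 ≤ f a := by
  have hf'_mono : MonotoneOn f' (Icc a b) :=
    monotoneOn_of_hasDerivWithinAt_nonneg (convex_Icc a b)
      (fun x hx => (hf' x hx).continuousAt.continuousWithinAt)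
      (fun x hx => (hf' x (interior_subset hx)).hasDerivWithinAt)
      (fun x hx => hf'' x (by rwa [interior_Icc] at hx))
  have hf_anti : AntitoneOn f (Icc a b) :=
    antitoneOn_of_hasDerivWithinAt_nonpos (convex_Icc a b)
      (fun x hx => (hf x hx).continuousAt.continuousWithinAt)
      (fun x hx => (hf x (interior_subset hx)).hasDerivWithinAt)
      (fun x hx => (hf'_mono (interior_subset hx) (right_mem_Icc.2 hab)
        (interior_subset hx).2).trans hf'b)
  exact hfb.trans (hf_anti (left_mem_Icc.2 hab) (right_mem_Icc.2 hab) hab)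

noncomputable def entropyDefect (γ t : ℝ) : ℝ :=
  (γ - 1) * (1 - t) * (t ^ γ + 1) / 2 + t ^ γ - t

noncomputable def entropyDefectDeriv (γ t : ℝ) : ℝ :=
  (γ - 1) * (γ * t ^ (γ - 1) * (1 - t) - t ^ γ - 1) / 2 + γ * t ^ (γ - 1) - 1

theorem hasDerivAt_entropyDefect (γ : ℝ) {t : ℝ} (ht : 0 < t) :
    HasDerivAt (entropyDefect γ) (entropyDefectDeriv γ t) t := by
  have hpow := Real.hasDerivAt_rpow_const (p := γ) (Or.inl ht.ne')
  have := ((((hasDerivAt_id t).const_sub 1).const_mul (γ - 1)).mul (hpow.add_const 1)).div_const 2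
    |>.add hpow |>.sub (hasDerivAt_id t)
  exact this.congr_deriv (by simp only [entropyDefectDeriv, id]; ring)

theorem hasDerivAt_entropyDefectDeriv (γ : ℝ) {t : ℝ} (ht : 0 < t) :
    HasDerivAt (entropyDefectDeriv γ)
      (γ * (γ - 1) * (γ + 1) * t ^ (γ - 2) * (1 - t) / 2) t := by
  have hpow := Real.hasDerivAt_rpow_const (p := γ) (Or.inl ht.ne')
  have hpow₁ := (Real.hasDerivAt_rpow_const (p := γ - 1) (Or.inl ht.ne')).const_mul γ
  have := (((hpow₁.mul ((hasDerivAt_id t).const_sub 1)).sub hpow).sub_const 1).const_mul (γ - 1)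
    |>.div_const 2 |>.add hpow₁ |>.sub_const 1
  have h₁ : t ^ (γ - 1) = t ^ (γ - 2) * t := by
    rw [← Real.rpow_add_one ht.ne']; ring_nf
  exact this.congr_deriv (by rw [show γ - 1 - 1 = γ - 2 by ring, h₁, id]; ring)

theorem entropyDefect_nonneg {γ t : ℝ} (hγ : 1 ≤ γ) (ht : 0 < t) (ht₁ : t ≤ 1) :
    0 ≤ entropyDefect γ t := by
  refine nonneg_of_hasDerivAt_of_deriv2_nonneg ht₁
    (fun x hx => hasDerivAt_entropyDefect γ (ht.trans_le hx.1))
    (fun x hx => hasDerivAt_entropyDefectDeriv γ (ht.trans_le hx.1))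
    (fun x hx => ?_) (by simp [entropyDefect]) (by simp [entropyDefectDeriv]; linarith)
  have hx₀ : 0 < x := ht.trans hx.1
  have hx₁ : 0 ≤ 1 - x := by linarith [hx.2]
  have : 0 ≤ x ^ (γ - 2) := Real.rpow_nonneg hx₀.le _
  have : 0 ≤ γ - 1 := by linarith
  positivity

theorem shock_entropy_defect_nonneg {γ ρ ρ₀ : ℝ} (hγ : 1 ≤ γ) (hρ : 0 < ρ) (hρρ₀ : ρ ≤ ρ₀) :
    0 ≤ (γ - 1) * (ρ₀ - ρ) * (ρ ^ γ + ρ₀ ^ γ) / 2 + ρ₀ * ρ ^ γ - ρ * ρ₀ ^ γ := by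
  have hρ₀ : 0 < ρ₀ := hρ.trans_le hρρ₀
  have hρ₀γ : 0 < ρ₀ ^ γ := Real.rpow_pos_of_pos hρ₀ γ
  have hscale : (γ - 1) * (ρ₀ - ρ) * (ρ ^ γ + ρ₀ ^ γ) / 2 + ρ₀ * ρ ^ γ - ρ * ρ₀ ^ γ
      = ρ₀ * ρ₀ ^ γ * entropyDefect γ (ρ / ρ₀) := by
    rw [entropyDefect, Real.div_rpow hρ.le hρ₀.le]
    field_simp
  rw [hscale]
  exact mul_nonneg (by positivity)
    (entropyDefect_nonneg hγ (div_pos hρ hρ₀) ((div_le_one hρ₀).2 hρρ₀))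

theorem entropy_dissipation_eq {γ ρ ρ₀ v v₀ s X X₀ : ℝ} (hρ : ρ ≠ 0) (hρ₀ : ρ₀ ≠ 0)
    (hρρ₀ : ρ - ρ₀ ≠ 0) (hγ : γ ≠ 0) (hγ₁ : γ - 1 ≠ 0) (hv : v = v₀ + s * (ρ - ρ₀))
    (hs : X - X₀ = γ * s ^ 2 * (ρ * ρ₀ * (ρ - ρ₀))) :
    (ρ * v - ρ₀ * v₀) / (ρ - ρ₀) *
        ((ρ * v) ^ 2 / (2 * ρ) + X / (γ * (γ - 1)) - ((ρ₀ * v₀) ^ 2 / (2 * ρ₀) + X₀ / (γ * (γ - 1))))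
      - (ρ * v * ((ρ * v) ^ 2 / (2 * ρ ^ 2) + X / ρ / (γ - 1))
        - ρ₀ * v₀ * ((ρ₀ * v₀) ^ 2 / (2 * ρ₀ ^ 2) + X₀ / ρ₀ / (γ - 1)))
      = s * ((γ - 1) * (ρ₀ - ρ) * (X + X₀) / 2 + ρ₀ * X - ρ * X₀) / (γ * (γ - 1)) := by
  rw [show X = X₀ + γ * s ^ 2 * (ρ * ρ₀ * (ρ - ρ₀)) by linarith, hv]
  field_simp
  ring

theorem two_shock_entropy_condition (γ ρ ρ₀ v₀ : ℝ) (hγ : 1 < γ)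
    (hρ : 0 < ρ) (hρρ₀ : ρ < ρ₀)
    (p : ℝ → ℝ) (hp : ∀ r, p r = r ^ γ / γ)
    (η q : ℝ → ℝ → ℝ)
    (hη : ∀ r m, η r m = m ^ 2 / (2 * r) + r ^ γ / (γ * (γ - 1)))
    (hq : ∀ r m, q r m = m * (m ^ 2 / (2 * r ^ 2) + r ^ (γ - 1) / (γ - 1)))
    (v m m₀ lam : ℝ)
    (hv : v = v₀ + Real.sqrt ((p ρ - p ρ₀) / (ρ * ρ₀ * (ρ - ρ₀))) * (ρ - ρ₀))
    (hm : m = ρ * v) (hm₀ : m₀ = ρ₀ * v₀)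
    (hlam : lam = (m - m₀) / (ρ - ρ₀)) :
    0 ≤ lam * (η ρ m - η ρ₀ m₀) - (q ρ m - q ρ₀ m₀) := by
  have hρ₀ : 0 < ρ₀ := hρ.trans hρρ₀
  have hγ₀ : 0 < γ := by linarith
  have hγ₁ : 0 < γ - 1 := by linarith
  have hρρ₀' : ρ - ρ₀ ≠ 0 := sub_ne_zero.2 hρρ₀.ne
  set s := Real.sqrt ((p ρ - p ρ₀) / (ρ * ρ₀ * (ρ - ρ₀)))
  have hs : ρ ^ γ - ρ₀ ^ γ = γ * s ^ 2 * (ρ * ρ₀ * (ρ - ρ₀)) := by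
    have hp_le : p ρ ≤ p ρ₀ := by
      rw [hp, hp]; gcongr
    have hden : ρ * ρ₀ * (ρ - ρ₀) ≤ 0 := (mul_neg_of_pos_of_neg (mul_pos hρ hρ₀) (by linarith)).le
    rw [Real.sq_sqrt (div_nonneg_of_nonpos (by linarith) hden), hp, hp]
    field_simp
  have hrpow (r : ℝ) (hr : 0 < r) : r ^ (γ - 1) = r ^ γ / r := by
    rw [Real.rpow_sub hr, Real.rpow_one]
  subst hlam hm hm₀
  rw [hη, hη, hq, hq, hrpow ρ hρ, hrpow ρ₀ hρ₀,
    entropy_dissipation_eq hρ.ne' hρ₀.ne' hρρ₀' hγ₀.ne' hγ₁.ne' hv hs]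
  exact div_nonneg (mul_nonneg (Real.sqrt_nonneg _) (shock_entropy_defect_nonneg hγ.le hρ hρρ₀.le))
    (by positivity)
end
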